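/- Let hₜ > 0, and let v : ℤ × {0,1,2,…} → ℝ satisfy the explicit recurrence v_k^{m+1} = v_{k−1}^m + v_{k+1}^m − v_k^{m−1} + hₜ² f_k^m for all k ∈ ℤ and m ≥ 1, together with v_k^1 = (1/2)(v_{k−1}^0 + v_{k+1}^0) + hₜ u_{1,k} + (1/2)hₜ² f_k^0 for all k ∈ ℤ, where u₁ : ℤ → ℝ and f : ℤ × {0,1,2,…} → ℝ are given. Then for all k ∈ ℤ and m ≥ 1: v_k^m = (1/2)(v_{k−m}^0 + v_{k+m}^0) + Σ_{l ∈ I_k^m} ( hₜ u_{1,l} + (1/2)hₜ² f_l^0 ) + hₜ² Σ_{p=1}^{m−1} Σ_{l ∈ I_k^{m−p}} f_l^p. -/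
import Mathlib


/-- explicit solution formula for the explicit four-point scheme for the
1D wave equation on the mesh of characteristics (Cauchy problem, k ∈ ℤ).
The index set I_k^j = {k − j + 1, k − j + 3, …, k + j − 1} is parametrized as
{k − j + 1 + 2t : t ∈ range j}. -/
theorem stmt_16 (ht : ℝ) (hht : 0 < ht)
    (v : ℤ → ℕ → ℝ) (u₁ : ℤ → ℝ) (f : ℤ → ℕ → ℝ)
    (hrec : ∀ (k : ℤ) (m : ℕ), 1 ≤ m →
      v k (m+1) = v (k-1) m + v (k+1) m - v k (m-1) + ht^2 * f k m)
    (hinit : ∀ k : ℤ,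
      v k 1 = (1/2) * (v (k-1) 0 + v (k+1) 0) + ht * u₁ k + (1/2) * ht^2 * f k 0) :
    ∀ (k : ℤ) (m : ℕ), 1 ≤ m →
      v k m = (1/2) * (v (k - (m:ℤ)) 0 + v (k + (m:ℤ)) 0)
        + ∑ t ∈ Finset.range m,
            (ht * u₁ (k - (m:ℤ) + 1 + 2*(t:ℤ)) + (1/2) * ht^2 * f (k - (m:ℤ) + 1 + 2*(t:ℤ)) 0)
        + ht^2 * ∑ p ∈ Finset.Icc 1 (m-1), ∑ t ∈ Finset.range (m - p),
            f (k - ((m:ℤ) - (p:ℤ)) + 1 + 2*(t:ℤ)) p := by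
  have main : ∀ (m : ℕ) (k : ℤ),
      v k m = (1/2) * (v (k - (m:ℤ)) 0 + v (k + (m:ℤ)) 0)
        + ∑ t ∈ Finset.range m,
            (ht * u₁ (k - (m:ℤ) + 1 + 2*(t:ℤ)) + (1/2) * ht^2 * f (k - (m:ℤ) + 1 + 2*(t:ℤ)) 0)
        + ht^2 * ∑ p ∈ Finset.Icc 1 (m-1), ∑ t ∈ Finset.range (m - p),
            f (k - ((m:ℤ) - (p:ℤ)) + 1 + 2*(t:ℤ)) p := by
    intro m
    induction m using Nat.strong_induction_on with
    | _ m ih =>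
      match m with
      | 0 => intro k; simp; ring
      | 1 =>
        intro k
        rw [hinit k]
        norm_num
        ring
      | (n+2) =>
        intro k
        have e := hrec k (n+1) (by omega)
        rw [e]
        simp only [show n+1-1 = n from rfl] at *
        rw [ih (n+1) (by omega) (k-1), ih (n+1) (by omega) (k+1), ih n (by omega) k]
        simp only [show n+2-1 = n+1 from rfl, show n+1-1 = n from rfl]
        -- normalize the boundary index expressions
        have e1 : k - 1 - ((n+1:ℕ):ℤ) = k - ((n+2:ℕ):ℤ) := by push_cast; ring
        have e2 : k + 1 + ((n+1:ℕ):ℤ) = k + ((n+2:ℕ):ℤ) := by push_cast; ring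
        have e3 : k - 1 + ((n+1:ℕ):ℤ) = k + ((n:ℕ):ℤ) := by push_cast; ring
        have e4 : k + 1 - ((n+1:ℕ):ℤ) = k - ((n:ℕ):ℤ) := by push_cast; ring
        rw [e1, e2, e3, e4]
        -- single-sum identity
        have h2 : (∑ t ∈ Finset.range (n+2),
              (ht * u₁ (k - ((n+2:ℕ):ℤ) + 1 + 2*(t:ℤ)) + (1/2) * ht^2 * f (k - ((n+2:ℕ):ℤ) + 1 + 2*(t:ℤ)) 0))
            = (∑ t ∈ Finset.range (n+1),
              (ht * u₁ (k - ((n+2:ℕ):ℤ) + 1 + 2*(t:ℤ)) + (1/2) * ht^2 * f (k - ((n+2:ℕ):ℤ) + 1 + 2*(t:ℤ)) 0))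
            + (∑ t ∈ Finset.range (n+1),
              (ht * u₁ (k - ((n:ℕ):ℤ) + 1 + 2*(t:ℤ)) + (1/2) * ht^2 * f (k - ((n:ℕ):ℤ) + 1 + 2*(t:ℤ)) 0))
            - (∑ t ∈ Finset.range n,
              (ht * u₁ (k - ((n:ℕ):ℤ) + 1 + 2*(t:ℤ)) + (1/2) * ht^2 * f (k - ((n:ℕ):ℤ) + 1 + 2*(t:ℤ)) 0)) := by
          rw [Finset.sum_range_succ (fun t : ℕ =>
                ht * u₁ (k - ((n+2:ℕ):ℤ) + 1 + 2*(t:ℤ)) + (1/2) * ht^2 * f (k - ((n+2:ℕ):ℤ) + 1 + 2*(t:ℤ)) 0) (n+1),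
              Finset.sum_range_succ (fun t : ℕ =>
                ht * u₁ (k - ((n:ℕ):ℤ) + 1 + 2*(t:ℤ)) + (1/2) * ht^2 * f (k - ((n:ℕ):ℤ) + 1 + 2*(t:ℤ)) 0) n]
          have harg : k - ((n+2:ℕ):ℤ) + 1 + 2*((n+1:ℕ):ℤ) = k - ((n:ℕ):ℤ) + 1 + 2*((n:ℕ):ℤ) := by
            push_cast; ring
          rw [harg]; ring
        -- double-sum identity
        have h3 : (∑ p ∈ Finset.Icc 1 (n+1), ∑ t ∈ Finset.range (n+2-p),
              f (k - (((n+2:ℕ):ℤ) - (p:ℤ)) + 1 + 2*(t:ℤ)) p)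
            = (∑ p ∈ Finset.Icc 1 n, ∑ t ∈ Finset.range (n+1-p),
              f (k - 1 - (((n+1:ℕ):ℤ) - (p:ℤ)) + 1 + 2*(t:ℤ)) p)
            + (∑ p ∈ Finset.Icc 1 n, ∑ t ∈ Finset.range (n+1-p),
              f (k + 1 - (((n+1:ℕ):ℤ) - (p:ℤ)) + 1 + 2*(t:ℤ)) p)
            - (∑ p ∈ Finset.Icc 1 (n-1), ∑ t ∈ Finset.range (n-p),
              f (k - (((n:ℕ):ℤ) - (p:ℤ)) + 1 + 2*(t:ℤ)) p)
            + f k (n+1) := by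
          rw [Finset.sum_Icc_succ_top (show 1 ≤ n+1 by omega)]
          rw [show n+2-(n+1) = 1 from by omega, Finset.sum_range_one]
          rw [show k - (((n+2:ℕ):ℤ) - ((n+1:ℕ):ℤ)) + 1 + 2*((0:ℕ):ℤ) = k from by push_cast; ring]
          have hsub : (∑ p ∈ Finset.Icc 1 (n-1), ∑ t ∈ Finset.range (n-p),
                f (k - (((n:ℕ):ℤ) - (p:ℤ)) + 1 + 2*(t:ℤ)) p)
              = ∑ p ∈ Finset.Icc 1 n, ∑ t ∈ Finset.range (n-p),
                f (k - (((n:ℕ):ℤ) - (p:ℤ)) + 1 + 2*(t:ℤ)) p := by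
            apply Finset.sum_subset (Finset.Icc_subset_Icc_right (by omega))
            intro p hp hnp
            have : n - p = 0 := by
              simp only [Finset.mem_Icc] at hp hnp; omega
            rw [this]; simp
          rw [hsub]
          have hpt : ∀ p ∈ Finset.Icc 1 n,
              (∑ t ∈ Finset.range (n+2-p), f (k - (((n+2:ℕ):ℤ) - (p:ℤ)) + 1 + 2*(t:ℤ)) p)
              = (∑ t ∈ Finset.range (n+1-p), f (k - 1 - (((n+1:ℕ):ℤ) - (p:ℤ)) + 1 + 2*(t:ℤ)) p)
              + (∑ t ∈ Finset.range (n+1-p), f (k + 1 - (((n+1:ℕ):ℤ) - (p:ℤ)) + 1 + 2*(t:ℤ)) p)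
              - (∑ t ∈ Finset.range (n-p), f (k - (((n:ℕ):ℤ) - (p:ℤ)) + 1 + 2*(t:ℤ)) p) := by
            intro p hp
            simp only [Finset.mem_Icc] at hp
            obtain ⟨q, hq⟩ : ∃ q, n = p + q := ⟨n - p, by omega⟩
            rw [show n+2-p = q+2 from by omega, show n+1-p = q+1 from by omega,
                show n-p = q from by omega]
            have eb1 : k - 1 - (((n+1:ℕ):ℤ) - (p:ℤ)) = k - (((n+2:ℕ):ℤ) - (p:ℤ)) := by
              push_cast; ring
            have eb2 : k + 1 - (((n+1:ℕ):ℤ) - (p:ℤ)) = k - (((n:ℕ):ℤ) - (p:ℤ)) := by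
              push_cast; ring
            rw [eb1, eb2]
            rw [Finset.sum_range_succ (fun t : ℕ =>
                  f (k - (((n+2:ℕ):ℤ) - (p:ℤ)) + 1 + 2*(t:ℤ)) p) (q+1),
                Finset.sum_range_succ (fun t : ℕ =>
                  f (k - (((n:ℕ):ℤ) - (p:ℤ)) + 1 + 2*(t:ℤ)) p) q]
            have harg : k - (((n+2:ℕ):ℤ) - (p:ℤ)) + 1 + 2*((q+1:ℕ):ℤ)
                = k - (((n:ℕ):ℤ) - (p:ℤ)) + 1 + 2*((q:ℕ):ℤ) := by push_cast; ring
            rw [harg]; ring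
          rw [Finset.sum_congr rfl hpt]
          simp only [Finset.sum_add_distrib, Finset.sum_sub_distrib]
        linear_combination -h2 - ht^2 * h3
  intro k m _
  exact main m k
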